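/- (Fusion.) Suppose (σ_n, d_{σ_n}) for n ∈ ℕ are conditions of ℙ(I), (k_n)_{n∈ℕ} is a strictly increasing sequence of positive integers, and for each n: {k_j : j < n} = ran(d_{σ_n}) ∩ [0, k_n) and σ_{n+1} ≤_{a_n} σ_n where a_n = {k_j : j < n}. Define σ(m)(i) = σ_n(m)(i) for any n with d_{σ_n}(m) ≤ i (these values are coherent), and define d_σ(m) = k_n where n is such that d_{σ_{n+1}}(m) = k_n. Then (σ, d_σ) is a condition of ℙ(I) and σ ≤ σ_n for every n. Moreover, the same conclusion holds if it is only assumed that {k_j : j < n} = (ran(d_{σ_n}) ∩ [0, k_n)) ∖ {0} for each n, provided ⋃_{n∈ℕ} d_{σ_n}⁻¹({0}) ∈ I. -/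
import Mathlib


/-- `I` is an ideal on ℕ: contains `∅`, closed under subsets and finite unions. -/
def IsIdeal (I : Set (Set ℕ)) : Prop :=
  ∅ ∈ I ∧ (∀ A B : Set ℕ, A ⊆ B → B ∈ I → A ∈ I) ∧
    (∀ A B : Set ℕ, A ∈ I → B ∈ I → A ∪ B ∈ I)

/-- `(σ, d)` is a condition of `ℙ(I)`. -/
def IsCondition (I : Set (Set ℕ)) (σ : ℕ → ℕ → Bool) (d : ℕ → ℕ) : Prop :=
  (∀ n, d n ≤ n) ∧ (∀ n, {m | d m = n} ∈ I)

/-- The ordering on conditions of `ℙ(I)`. -/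
def CondLe (σ : ℕ → ℕ → Bool) (dσ : ℕ → ℕ) (τ : ℕ → ℕ → Bool) (dτ : ℕ → ℕ) : Prop :=
  (∀ n, dσ n ≤ dτ n ∧ ∀ i, dτ n ≤ i → i < n → σ n i = τ n i) ∧
  (∃ e : ℕ → ℕ, (∀ n, e n ≤ n) ∧ ∀ n, dσ n = e (dτ n)) ∧
  (∀ n m, dτ n = dτ m → ∀ i, dσ n ≤ i → i < dτ n → σ n i = σ m i)

/-- `σ ≤ₐ τ` : `σ ≤ τ` and the fibres of `dσ` and `dτ` over every `i ∈ a` agree. -/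
def CondLeA (σ : ℕ → ℕ → Bool) (dσ : ℕ → ℕ) (τ : ℕ → ℕ → Bool) (dτ : ℕ → ℕ)
    (a : Set ℕ) : Prop :=
  CondLe σ dσ τ dτ ∧ ∀ i ∈ a, {m | dσ m = i} = {m | dτ m = i}

theorem condLe_refl (σ : ℕ → ℕ → Bool) (d : ℕ → ℕ) : CondLe σ d σ d :=
  ⟨fun _ => ⟨le_refl _, fun _ _ _ => rfl⟩, ⟨id, fun n => le_refl n, fun _ => rfl⟩,
   fun n _ _ i h1 h2 => (Nat.lt_irrefl (d n) (lt_of_le_of_lt h1 h2)).elim⟩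

theorem condLe_trans {σ1 σ2 σ3 : ℕ → ℕ → Bool} {d1 d2 d3 : ℕ → ℕ}
    (hd3 : ∀ n, d3 n ≤ n)
    (h12 : CondLe σ1 d1 σ2 d2) (h23 : CondLe σ2 d2 σ3 d3) :
    CondLe σ1 d1 σ3 d3 := by
  obtain ⟨a12, ⟨e12, he12, he12'⟩, c12⟩ := h12
  obtain ⟨a23, ⟨e23, he23, he23'⟩, c23⟩ := h23
  refine ⟨fun n => ⟨le_trans (a12 n).1 (a23 n).1, ?_⟩,
    ⟨e12 ∘ e23, fun n => le_trans (he12 _) (he23 n),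
      fun n => by simp only [Function.comp]; rw [he12' n, he23' n]⟩, ?_⟩
  · intro i h3i hin
    rw [(a12 n).2 i (le_trans (a23 n).1 h3i) hin, (a23 n).2 i h3i hin]
  · intro n m hnm i h1i hi3
    have hd2 : d2 n = d2 m := by rw [he23' n, he23' m, hnm]
    by_cases h2 : i < d2 n
    · exact c12 n m hd2 i h1i h2
    · push_neg at h2
      have hin : i < n := lt_of_lt_of_le hi3 (hd3 n)
      have him : i < m := by have h := hd3 m; omega
      calc σ1 n i = σ2 n i := (a12 n).2 i h2 hin
        _ = σ2 m i := c23 n m hnm i h2 hi3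
        _ = σ1 m i := ((a12 m).2 i (hd2 ▸ h2) him).symm

/-- Fusion lemma: if `σₙ` is a fusion sequence of conditions of `ℙ(I)` along a
strictly increasing sequence `kₙ` of positive integers, and `(σ, dσ)` is the limit
defined by `σ m i = σₙ m i` whenever `dₙ m ≤ i < m` and `dσ m = kₙ` whenever
`d_{σ_{n+1}} m = kₙ` (with `dσ m = 0` if there is no such `n`), then `(σ, dσ)` is a
condition of `ℙ(I)` below every `σₙ`; moreover, the same conclusion holds when the
range condition only holds away from `0`, provided `⋃ₙ d_{σₙ}⁻¹{0} ∈ I`. -/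
theorem fusion (I : Set (Set ℕ)) (hI : IsIdeal I)
    (σn : ℕ → ℕ → ℕ → Bool) (dn : ℕ → ℕ → ℕ) (k : ℕ → ℕ)
    (σ : ℕ → ℕ → Bool) (dσ : ℕ → ℕ)
    (hcond : ∀ n, IsCondition I (σn n) (dn n))
    (hmono : StrictMono k) (hpos : ∀ n, 0 < k n)
    (hstep : ∀ n, CondLeA (σn (n+1)) (dn (n+1)) (σn n) (dn n) {j | ∃ i < n, k i = j})
    (hσ : ∀ m i n, dn n m ≤ i → i < m → σ m i = σn n m i)
    (hdσ : ∀ m n, dn (n+1) m = k n → dσ m = k n)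
    (hdσ0 : ∀ m, (∀ n, dn (n+1) m ≠ k n) → dσ m = 0) :
    ((∀ n, {j | ∃ i < n, k i = j} = {j | j < k n ∧ ∃ m, dn n m = j}) →
      IsCondition I σ dσ ∧ ∀ n, CondLe σ dσ (σn n) (dn n)) ∧
    (((∀ n, {j | ∃ i < n, k i = j} = {j | j < k n ∧ ∃ m, dn n m = j} \ {0}) ∧
        (⋃ n, {m | dn n m = 0}) ∈ I) →
      IsCondition I σ dσ ∧ ∀ n, CondLe σ dσ (σn n) (dn n)) := by
  have hkm : ∀ m, m < k (m+1) :=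
    fun m => lt_of_le_of_lt hmono.le_apply (hmono (Nat.lt_succ_self m))
  -- fibre stability above stage n+1
  have stab : ∀ n s, n < s → ∀ m, (dn s m = k n ↔ dn (n+1) m = k n) := by
    intro n s
    induction s with
    | zero => omega
    | succ s ih =>
      intro hns m
      by_cases h : n < s
      · have hf := (hstep s).2 (k n) ⟨n, h, rfl⟩
        have hiff : dn (s+1) m = k n ↔ dn s m = k n := Set.ext_iff.mp hf m
        rw [hiff]; exact ih h m
      · have : n = s := by omega
        subst this
        exact Iff.rfl
  have step_le : ∀ N s, N ≤ s → CondLe (σn s) (dn s) (σn N) (dn N) := by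
    intro N s hNs
    induction s, hNs using Nat.le_induction with
    | base => exact condLe_refl _ _
    | succ s hs ih => exact condLe_trans (hcond N).1 (hstep s).1 ih
  have dn_mono : ∀ m N s, N ≤ s → dn s m ≤ dn N m := fun m N s h => ((step_le N s h).1 m).1
  have dσ_le : ∀ N m, dσ m ≤ dn N m := by
    intro N m
    by_cases h : ∃ n, dn (n+1) m = k n
    · obtain ⟨n, hn⟩ := h
      rw [hdσ m n hn]
      rcases le_total (n+1) N with hle | hle
      · have hNm : dn N m = k n := (stab n N (by omega) m).mpr hn
        omega
      · have h2 := dn_mono m N (n+1) hle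
        omega
    · push_neg at h
      rw [hdσ0 m h]
      exact Nat.zero_le _
  have dn_eq : ∀ N s, N ≤ s → ∀ m m', dn N m = dn N m' → dn s m = dn s m' := by
    intro N s h m m' hmm
    obtain ⟨_, ⟨e, _, he⟩, _⟩ := step_le N s h
    rw [he m, he m', hmm]
  have transfer : ∀ N m m', dn N m = dn N m' → ∀ n, dn (n+1) m = k n → dn (n+1) m' = k n := by
    intro N m m' hmm n hn
    rcases le_total N (n+1) with hle | hle
    · rw [← dn_eq N (n+1) hle m m' hmm]; exact hn
    · have h1 : dn N m = k n := (stab n N (by omega) m).mpr hn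
      exact (stab n N (by omega) m').mp (hmm ▸ h1)
  have dσ_eq : ∀ N m m', dn N m = dn N m' → dσ m = dσ m' := by
    intro N m m' hmm
    by_cases h : ∃ n, dn (n+1) m = k n
    · obtain ⟨n, hn⟩ := h
      rw [hdσ m n hn, hdσ m' n (transfer N m m' hmm n hn)]
    · push_neg at h
      rw [hdσ0 m h, hdσ0 m' (fun n hn => h n (transfer N m' m hmm.symm n hn))]
  have main : (∀ m s, m < k s → (∀ n, dn (n+1) m ≠ k n) → dn s m = 0) →
      {m | dσ m = 0} ∈ I →
      IsCondition I σ dσ ∧ ∀ n, CondLe σ dσ (σn n) (dn n) := by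
    intro Hbad HI0
    classical
    constructor
    · constructor
      · intro m
        exact le_trans (dσ_le m m) ((hcond m).1 m)
      · intro j
        by_cases hj : j = 0
        · subst hj; exact HI0
        · by_cases hk : ∃ n, k n = j
          · obtain ⟨n, rfl⟩ := hk
            have hset : {m | dσ m = k n} = {m | dn (n+1) m = k n} := by
              ext m
              simp only [Set.mem_setOf_eq]
              constructor
              · intro hm
                by_cases h : ∃ n', dn (n'+1) m = k n'
                · obtain ⟨n', hn'⟩ := h
                  have h1 : dσ m = k n' := hdσ m n' hn'
                  have h2 : k n' = k n := by omega
                  have h3 : n' = n := hmono.injective h2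
                  rw [← h3]; exact h3 ▸ hn'
                · push_neg at h
                  rw [hdσ0 m h] at hm
                  exact absurd hm.symm (hpos n).ne'
              · exact hdσ m n
            rw [hset]
            exact (hcond (n+1)).2 (k n)
          · have hset : {m | dσ m = j} = ∅ := by
              ext m
              simp only [Set.mem_setOf_eq, Set.mem_empty_iff_false, iff_false]
              intro hm
              by_cases h : ∃ n', dn (n'+1) m = k n'
              · obtain ⟨n', hn'⟩ := h
                exact hk ⟨n', by rw [← hdσ m n' hn', hm]⟩
              · push_neg at h
                rw [hdσ0 m h] at hm
                exact hj hm.symm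
            rw [hset]; exact hI.1
    · intro N
      refine ⟨fun m => ⟨dσ_le N m, fun i hi him => hσ m i N hi him⟩, ?_, ?_⟩
      · refine ⟨fun j => if h : ∃ m, dn N m = j then dσ h.choose else 0, ?_, ?_⟩
        · intro j
          by_cases h : ∃ m, dn N m = j
          · simp only [dif_pos h]
            calc dσ h.choose ≤ dn N h.choose := dσ_le N h.choose
              _ = j := h.choose_spec
          · simp [dif_neg h]
        · intro m
          have h : ∃ m', dn N m' = dn N m := ⟨m, rfl⟩
          simp only [dif_pos h]
          exact dσ_eq N m h.choose h.choose_spec.symm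
      · intro m m' hmm i hdi hiN
        have key : ∃ s, N ≤ s ∧ dn s m ≤ i := by
          by_cases h : ∃ n, dn (n+1) m = k n
          · obtain ⟨n, hn⟩ := h
            refine ⟨max N (n+1), le_max_left _ _, ?_⟩
            have hlt : n < max N (n+1) :=
              lt_of_lt_of_le (Nat.lt_succ_self n) (le_max_right N (n+1))
            have hs : dn (max N (n+1)) m = k n := (stab n (max N (n+1)) hlt m).mpr hn
            rw [hs, ← hdσ m n hn]
            exact hdi
          · push_neg at h
            refine ⟨max N (m+1), le_max_left _ _, ?_⟩
            have hms : m < k (max N (m+1)) :=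
              lt_of_lt_of_le (hkm m) (hmono.monotone (le_max_right N (m+1)))
            rw [Hbad m (max N (m+1)) hms h]
            exact Nat.zero_le i
        obtain ⟨s, hNs, hsi⟩ := key
        have hsm' : dn s m' ≤ i := by
          rw [dn_eq N s hNs m' m hmm.symm]; exact hsi
        have him : i < m := lt_of_lt_of_le hiN ((hcond N).1 m)
        have him' : i < m' := by
          have h1 := (hcond N).1 m'; omega
        calc σ m i = σn s m i := hσ m i s hsi him
          _ = σn s m' i := (step_le N s hNs).2.2 m m' hmm i hsi hiN
          _ = σ m' i := (hσ m' i s hsm' him').symm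
  constructor
  · intro h1
    have noBad : ∀ m s, m < k s → ¬ ∀ n, dn (n+1) m ≠ k n := by
      intro m s hms hb
      have hmem : dn s m ∈ {j | j < k s ∧ ∃ m', dn s m' = j} :=
        ⟨lt_of_le_of_lt ((hcond s).1 m) hms, m, rfl⟩
      rw [← h1 s] at hmem
      obtain ⟨i, his, hki⟩ := hmem
      exact hb i ((stab i s his m).mp hki.symm)
    refine main (fun m s hms hb => absurd hb (noBad m s hms)) ?_
    have hset : {m | dσ m = 0} = ∅ := by
      ext m
      simp only [Set.mem_setOf_eq, Set.mem_empty_iff_false, iff_false]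
      intro hm
      by_cases h : ∃ n, dn (n+1) m = k n
      · obtain ⟨n, hn⟩ := h
        rw [hdσ m n hn] at hm
        exact (hpos n).ne' hm
      · push_neg at h
        exact noBad m (m+1) (hkm m) h
    rw [hset]; exact hI.1
  · rintro ⟨h2, h2I⟩
    have Hbad : ∀ m s, m < k s → (∀ n, dn (n+1) m ≠ k n) → dn s m = 0 := by
      intro m s hms hb
      by_contra h0
      have hmem : dn s m ∈ {j | j < k s ∧ ∃ m', dn s m' = j} \ {0} :=
        ⟨⟨lt_of_le_of_lt ((hcond s).1 m) hms, m, rfl⟩, h0⟩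
      rw [← h2 s] at hmem
      obtain ⟨i, his, hki⟩ := hmem
      exact hb i ((stab i s his m).mp hki.symm)
    refine main Hbad (hI.2.1 _ _ ?_ h2I)
    intro m hm
    simp only [Set.mem_setOf_eq] at hm
    by_cases h : ∃ n, dn (n+1) m = k n
    · obtain ⟨n, hn⟩ := h
      rw [hdσ m n hn] at hm
      exact absurd hm (hpos n).ne'
    · push_neg at h
      exact Set.mem_iUnion.mpr ⟨m+1, Hbad m (m+1) (hkm m) h⟩
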